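/- arXiv:1105.1048 — 2 statements merged into one kernel-verified Lean document; each statement's English description precedes it below -/
import Mathlib

section
/- Let G = H₁ ∗_K H₂ be an amalgamated free product, and let (β₁, …, β_l) be a reduced syllabic expression with l ≥ 1. Then β₁β₂⋯β_l ≠ 1 in G. -/
open Monoid

/-- The element of the amalgamated free product represented by a syllabic expression. -/
def syllProd {K : Type} [Group K] {H : Bool → Type} [∀ b, Group (H b)]
    (φ : ∀ b, K →* H b) (w : List ((b : Bool) × H b)) : PushoutI φ :=
  (w.map fun β => PushoutI.of (φ := φ) β.1 β.2).prod

/-- A nonempty syllabic expression is reduced if it is a single nontrivial syllable, or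
consecutive syllables lie in different factors and no syllable lies in (the image of) `K`. -/
def IsReducedSyll {K : Type} [Group K] {H : Bool → Type} [∀ b, Group (H b)]
    (φ : ∀ b, K →* H b) (w : List ((b : Bool) × H b)) : Prop :=
  (∃ β : (b : Bool) × H b, w = [β] ∧ β.2 ≠ 1) ∨
    (2 ≤ w.length ∧ w.Chain' (fun β β' => β.1 ≠ β'.1) ∧
      ∀ β ∈ w, β.2 ∉ Set.range (φ β.1))

section

variable {K : Type} [Group K] {H : Bool → Type} [∀ b, Group (H b)] (φ : ∀ b, K →* H b)

theorem syllProd_singleton (β : (b : Bool) × H b) :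
    syllProd φ [β] = PushoutI.of β.1 β.2 := by
  simp [syllProd]

theorem ofCoprodI_word_prod (W : CoprodI.Word H) :
    PushoutI.ofCoprodI (φ := φ) W.prod = syllProd φ W.toList := by
  simp only [CoprodI.Word.prod, syllProd, map_list_prod, List.map_map]
  rfl

theorem syllProd_ne_one_of_not_mem_range (hinj : ∀ b, Function.Injective (φ b))
    {w : List ((b : Bool) × H b)} (hw : w ≠ []) (hchain : w.IsChain fun β β' => β.1 ≠ β'.1)
    (hK : ∀ β ∈ w, β.2 ∉ Set.range (φ β.1)) :
    syllProd φ w ≠ 1 := by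
  intro h
  have hne_one : ∀ β ∈ w, β.2 ≠ 1 := fun β hβ hβ1 => hK β hβ ⟨1, by rw [map_one, hβ1]⟩
  let W : CoprodI.Word H := ⟨w, hne_one, hchain⟩
  have hred : PushoutI.Reduced φ W := hK
  have hW : W = .empty :=
    hred.eq_empty_of_mem_range hinj (by rw [ofCoprodI_word_prod, h]; exact one_mem _)
  exact hw (congrArg CoprodI.Word.toList hW)

end

theorem reduced_syllabic_word_ne_one_general
    {K : Type} [Group K] {H : Bool → Type} [∀ b, Group (H b)]
    (φ : ∀ b, K →* H b)
    (hinj : ∀ b, Function.Injective (φ b))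
    (w : List ((b : Bool) × H b))
    (hw : IsReducedSyll φ w) :
    syllProd φ w ≠ 1 := by
  rcases hw with ⟨β, rfl, hβ⟩ | ⟨hlen, hchain, hK⟩
  · rw [syllProd_singleton, ne_eq, ← map_one (PushoutI.of β.1)]
    exact (PushoutI.of_injective hinj β.1).ne hβ
  · exact syllProd_ne_one_of_not_mem_range φ hinj (List.ne_nil_of_length_pos (by omega))
      hchain hK

/-- normal form theorem for amalgamated free products. A reduced
syllabic expression of length at least one does not represent the identity of
`G = H₁ ∗_K H₂`. -/
theorem reduced_syllabic_word_ne_one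
    {K : Type} [Group K] {H : Bool → Type} [∀ b, Group (H b)]
    (φ : ∀ b, K →* H b)
    (hinj : ∀ b, Function.Injective (φ b))
    (w : List ((b : Bool) × H b))
    (hlen : 1 ≤ w.length)
    (hw : IsReducedSyll φ w) :
    syllProd φ w ≠ 1 :=
  reduced_syllabic_word_ne_one_general φ hinj w hw
end

section
/- Let Γ be a Coxeter graph with m_{s,t} = ∞ for some s ≠ t, and suppose Γ_{X'} is a connected component of Γ_{X₂} where X₂ = X ∖ X₁ as in the decomposition of Γ_X (X = S∖{s}, X₁ the component of Γ_X containing t). If X' ∩ Y₁ = ∅ (Y₁ the component of Γ_{S∖{t}} containing s), then Γ_{X'} is a connected component of Γ, contradicting connectedness of Γ when |S| ≥ 2. Hence every connected component of Γ_{X₂} is contained in Y₁. -/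
/-- The Coxeter graph of a Coxeter matrix: two distinct vertices `u, v` are adjacent
iff `m_{u,v} ≥ 3` (including `m_{u,v} = ∞`, encoded by `0`), i.e. iff `M u v ≠ 2`. -/
def coxGraph {S : Type} (M : CoxeterMatrix S) : SimpleGraph S where
  Adj u v := u ≠ v ∧ M u v ≠ 2
  symm := by
    constructor
    rintro u v ⟨h1, h2⟩
    exact ⟨h1.symm, by rwa [M.symmetric v u]⟩
  loopless := ⟨fun u hu => hu.1 rfl⟩

/-- `u` and `v` are connected by a path of the graph `G` staying inside the subset `X`. -/
def ReachIn {S : Type} (G : SimpleGraph S) (X : Set S) (u v : S) : Prop :=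
  ∃ (hu : u ∈ X) (hv : v ∈ X), (G.induce X).Reachable ⟨u, hu⟩ ⟨v, hv⟩

/-!
If the component `C` of `Γ_{X₂}` missed `Y₁`, no edge of `Γ` could leave `C`: an edge to `s`
would put its other end in `Y₁`, an edge into `X₁` would put its other end in `X₁`, and an edge
to the rest of `X₂` stays in `C`. So `C` would be all of the connected graph `Γ` and contain
`s ∉ X₂`. Hence `C` meets `Y₁`, and since `X₂ ⊆ S ∖ {t}` it lies in the component `Y₁` of
`Γ_{S ∖ {t}}`.
-/

theorem SimpleGraph.Reachable.mem_of_forall_adj_mem {V : Type} {G : SimpleGraph V} {C : Set V}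
    {u v : V} (hC : ∀ x ∈ C, ∀ y, G.Adj x y → y ∈ C) (h : G.Reachable u v) (hu : u ∈ C) :
    v ∈ C := by
  obtain ⟨p⟩ := h
  induction p with
  | nil => exact hu
  | cons hadj _ ih => exact ih (hC _ hu _ hadj)

namespace ReachIn

variable {S : Type} {G : SimpleGraph S} {X Y : Set S} {a u v w : S}

lemma refl (hu : u ∈ X) : ReachIn G X u u := ⟨hu, hu, SimpleGraph.Reachable.refl _⟩

lemma symm : ReachIn G X u v → ReachIn G X v u := fun ⟨hu, hv, h⟩ => ⟨hv, hu, h.symm⟩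

lemma trans : ReachIn G X u v → ReachIn G X v w → ReachIn G X u w :=
  fun ⟨hu, _, h⟩ ⟨_, hw, h'⟩ => ⟨hu, hw, h.trans h'⟩

lemma mem_right : ReachIn G X u v → v ∈ X := fun ⟨_, hv, _⟩ => hv

lemma mono (hXY : X ⊆ Y) : ReachIn G X u v → ReachIn G Y u v := by
  rintro ⟨hu, hv, h⟩
  exact ⟨hXY hu, hXY hv, h.map (G.induceHomOfLE hXY).toHom⟩

lemma step (h : ReachIn G X u v) (hvw : G.Adj v w) (hw : w ∈ X) : ReachIn G X u w :=
  let ⟨hu, _, hr⟩ := h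
  ⟨hu, hw, hr.trans (SimpleGraph.Adj.reachable (G := G.induce X) hvw)⟩

lemma diff_setOf_subset_compl_singleton : X \ {v | ReachIn G X u v} ⊆ {u}ᶜ := by
  rintro _ ⟨hu, hnot⟩ rfl
  exact hnot (refl hu)

lemma setOf_subset_setOf_of_mem (hXY : X ⊆ Y) (huw : ReachIn G X u w) (haw : ReachIn G Y a w) :
    {v | ReachIn G X u v} ⊆ {v | ReachIn G Y a v} :=
  fun _ huv => haw.trans ((huw.symm.trans huv).mono hXY)

end ReachIn

/-- Here `{s}ᶜ \ {x | ReachIn G {s}ᶜ t x}` is `X₂` and `{v | ReachIn G {t}ᶜ s v}` is `Y₁`. -/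
lemma forall_adj_mem_of_disjoint {S : Type} {G : SimpleGraph S} {s t u : S} (hst : s ≠ t)
    (hdisj : Disjoint {v | ReachIn G ({s}ᶜ \ {x | ReachIn G {s}ᶜ t x}) u v}
      {v | ReachIn G {t}ᶜ s v}) :
    ∀ v ∈ {v | ReachIn G ({s}ᶜ \ {x | ReachIn G {s}ᶜ t x}) u v}, ∀ w, G.Adj v w →
      w ∈ {v | ReachIn G ({s}ᶜ \ {x | ReachIn G {s}ᶜ t x}) u v} := by
  intro v hv w hvw
  have hvX₂ := ReachIn.mem_right hv
  obtain rfl | hws := eq_or_ne w s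
  · have hvY₁ : ReachIn G {t}ᶜ w v :=
      (ReachIn.refl hst).step hvw.symm (ReachIn.diff_setOf_subset_compl_singleton hvX₂)
    exact absurd hvY₁ (Set.disjoint_left.mp hdisj hv)
  · by_cases hwX₁ : ReachIn G {s}ᶜ t w
    · exact absurd (hwX₁.step hvw.symm hvX₂.1) hvX₂.2
    · exact ReachIn.step hv hvw ⟨hws, hwX₁⟩

theorem component_of_X2_subset_Y1_general {S : Type} (M : CoxeterMatrix S)
    (hconn : (coxGraph M).Connected)
    (s t : S) (hst : s ≠ t)
    (X₂ : Set S)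
    (hX₂ : X₂ = ({s}ᶜ : Set S) \ {u | ReachIn (coxGraph M) {s}ᶜ t u})
    (Y₁ : Set S)
    (hY₁ : Y₁ = {u | ReachIn (coxGraph M) {t}ᶜ s u})
    (u : S) (hu : u ∈ X₂)
    (C : Set S) (hC : C = {v | ReachIn (coxGraph M) X₂ u v}) :
    (Disjoint C Y₁ → ∀ v ∈ C, ∀ w : S, (coxGraph M).Adj v w → w ∈ C)
      ∧ ¬ Disjoint C Y₁
      ∧ C ⊆ Y₁ := by
  subst hX₂ hY₁ hC
  have hclosed := forall_adj_mem_of_disjoint (G := coxGraph M) (u := u) hst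
  have hmeet : ¬ Disjoint _ _ := fun hdisj =>
    have hsC := (hconn u s).mem_of_forall_adj_mem (hclosed hdisj) (ReachIn.refl hu)
    hsC.mem_right.1 rfl
  refine ⟨hclosed, hmeet, ?_⟩
  obtain ⟨w, hwC, hwY₁⟩ := Set.not_disjoint_iff.mp hmeet
  exact ReachIn.setOf_subset_setOf_of_mem ReachIn.diff_setOf_subset_compl_singleton hwC hwY₁

/-- Let `Γ` be a connected Coxeter graph on `S` (with `|S| ≥ 2`,
which follows from `s ≠ t`), with `m_{s,t} = ∞`.  With `X = S ∖ {s}`, `X₁` the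
component of `Γ_X` containing `t`, `X₂ = X ∖ X₁`, and `Y₁` the component of
`Γ_{S ∖ {t}}` containing `s`: for the connected component `C` of `Γ_{X₂}` containing a
given vertex `u ∈ X₂`, if `C ∩ Y₁ = ∅` then `C` is (the vertex set of) a connected
component of `Γ`, which is impossible since `Γ` is connected; hence every connected
component of `Γ_{X₂}` is contained in `Y₁`. -/
theorem component_of_X2_subset_Y1 {S : Type} [Fintype S] (M : CoxeterMatrix S)
    (hconn : (coxGraph M).Connected)
    (s t : S) (hst : s ≠ t) (hinf : M s t = 0)
    (X₂ : Set S)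
    (hX₂ : X₂ = ({s}ᶜ : Set S) \ {u | ReachIn (coxGraph M) {s}ᶜ t u})
    (Y₁ : Set S)
    (hY₁ : Y₁ = {u | ReachIn (coxGraph M) {t}ᶜ s u})
    (u : S) (hu : u ∈ X₂)
    (C : Set S) (hC : C = {v | ReachIn (coxGraph M) X₂ u v}) :
    (Disjoint C Y₁ → ∀ v ∈ C, ∀ w : S, (coxGraph M).Adj v w → w ∈ C)
      ∧ ¬ Disjoint C Y₁
      ∧ C ⊆ Y₁ :=
  component_of_X2_subset_Y1_general M hconn s t hst X₂ hX₂ Y₁ hY₁ u hu C hC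
end
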